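/- arXiv:1407.2385 — 2 statements merged into one kernel-verified Lean document; each statement's English description precedes it below -/
import Mathlib

section
/- Let Λ be a K-algebra, U a Λ-module, y ∈ U, and γ, α ∈ Λ. Fix μ ≥ 1 and suppose γ^{μ+1}·y = 0, the element α·γ^μ·y is nonzero, and there are scalars k_0, …, k_{μ−1} ∈ K with α·γ^i·y = k_i·α·γ^μ·y for all 0 ≤ i ≤ μ−1. Then there exist scalars c_1, …, c_μ ∈ K such that the element x = y + Σ_{j=1}^{μ} c_j·γ^j·y satisfies α·γ^i·x = 0 for all 0 ≤ i ≤ μ−1. -/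
/-!
Write `w = α γ^μ y`. The hypotheses give scalars `a_j` with `α γ^j y = a_j w` for all `j`, where
`a_μ = 1` and `a_j = 0` for `j > μ`. For `x = Σ_{j ≤ μ} c_j γ^j y` one gets
`α γ^i x = (Σ_j c_j a_{i+j}) w`, and this scalar is the coefficient of `X^{μ-i}` in `C · E`,
where `C = Σ c_j X^j` and `E = Σ a_{μ-m} X^m`. Since `E` has constant term `a_μ = 1`, the choice
`C = E⁻¹` in `K⟦X⟧` makes these coefficients vanish for `i < μ` and has `c_0 = 1`.
-/

open Finset PowerSeries

theorem add_sum_Icc_one_eq_sum_range {M : Type*} [AddCommMonoid M] (f : ℕ → M) (n : ℕ) :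
    f 0 + ∑ j ∈ Icc 1 n, f j = ∑ j ∈ range (n + 1), f j := by
  rw [sum_range_eq_add_Ico _ n.succ_pos, Nat.succ_eq_add_one, Ico_add_one_right_eq_Icc]

theorem sum_coeff_mul_shift_eq_coeff_mul {K : Type*} [CommSemiring K] (c : K⟦X⟧) (a : ℕ → K)
    {μ i : ℕ} (hi : i ≤ μ) (ha : ∀ m, μ < m → a m = 0) :
    ∑ j ∈ range (μ + 1), coeff j c * a (i + j) = coeff (μ - i) (c * mk fun m => a (μ - m)) := by
  rw [coeff_mul, Nat.sum_antidiagonal_eq_sum_range_succ (fun p q => coeff p c * coeff q _)]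
  symm
  refine sum_subset_zero_on_sdiff (range_subset_range.2 (by omega)) (fun j hj => ?_)
    (fun j hj => ?_)
  · simp only [mem_sdiff, mem_range] at hj
    rw [ha _ (by omega), mul_zero]
  · simp only [mem_range] at hj
    rw [coeff_mk, show μ - (μ - i - j) = i + j by omega]

theorem smul_sum_smul_pow_smul {K Λ U : Type*} [CommSemiring K] [Semiring Λ] [Algebra K Λ]
    [AddCommMonoid U] [Module Λ U] [Module K U] [IsScalarTower K Λ U]
    {y w : U} {α γ : Λ} {a : ℕ → K} (ha : ∀ j, (α * γ ^ j) • y = a j • w)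
    (i : ℕ) (s : Finset ℕ) (c : ℕ → K) :
    (α * γ ^ i) • ∑ j ∈ s, c j • (γ ^ j) • y = (∑ j ∈ s, c j * a (i + j)) • w := by
  simp_rw [smul_sum, sum_smul, smul_comm _ (c _), ← mul_smul, mul_assoc, ← pow_add, ha, smul_smul]

theorem exists_smul_pow_smul_eq_smul_top {K Λ U : Type*} [Semiring K] [Semiring Λ]
    [AddCommMonoid U] [Module Λ U] [Module K U] {y : U} {α γ : Λ} {μ : ℕ} (k : ℕ → K)
    (hnil : (γ ^ (μ + 1)) • y = 0) (hk : ∀ i < μ, (α * γ ^ i) • y = k i • (α * γ ^ μ) • y) :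
    ∃ a : ℕ → K, a μ = 1 ∧ (∀ m, μ < m → a m = 0) ∧
      ∀ j, (α * γ ^ j) • y = a j • (α * γ ^ μ) • y := by
  refine ⟨fun j => if j < μ then k j else if j = μ then 1 else 0, by simp,
    fun m hm => by simp [hm.ne', hm.not_gt], fun j => ?_⟩
  rcases lt_trichotomy j μ with hj | rfl | hj
  · simp [hj, hk j hj]
  · simp
  · obtain ⟨d, rfl⟩ := Nat.exists_eq_add_of_lt hj
    rw [show α * γ ^ (μ + d + 1) = α * γ ^ d * γ ^ (μ + 1) by rw [mul_assoc, ← pow_add]; ring_nf,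
      mul_smul, hnil, smul_zero]
    simp [hj.not_gt, hj.ne']

theorem top_element_change_general (K Λ U : Type) [Field K] [Ring Λ] [Algebra K Λ]
    [AddCommGroup U] [Module Λ U] [Module K U] [IsScalarTower K Λ U]
    (y : U) (γ α : Λ) (μ : ℕ) (hμ : 1 ≤ μ)
    (hnil : (γ ^ (μ + 1)) • y = 0)
    (k : ℕ → K)
    (hk : ∀ i : ℕ, i ≤ μ - 1 → (α * γ ^ i) • y = k i • ((α * γ ^ μ) • y)) :
    ∃ c : ℕ → K, ∀ i : ℕ, i ≤ μ - 1 →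
      (α * γ ^ i) • (y + ∑ j ∈ Finset.Icc 1 μ, c j • ((γ ^ j) • y)) = 0 := by
  obtain ⟨a, ha_top, ha_zero, ha⟩ :=
    exists_smul_pow_smul_eq_smul_top k hnil fun i hi => hk i (by omega)
  -- the coefficients of index `m > μ` are junk (`μ - m = 0`) and never enter
  set E : K⟦X⟧ := mk fun m => a (μ - m)
  have hE : constantCoeff E = 1 := by simp [E, ← coeff_zero_eq_constantCoeff_apply, ha_top]
  refine ⟨fun j => coeff j E⁻¹, fun i hi => ?_⟩
  have hx : y + ∑ j ∈ Icc 1 μ, coeff j E⁻¹ • (γ ^ j) • y =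
      ∑ j ∈ range (μ + 1), coeff j E⁻¹ • (γ ^ j) • y := by
    rw [← add_sum_Icc_one_eq_sum_range]; simp [hE]
  rw [hx, smul_sum_smul_pow_smul ha, sum_coeff_mul_shift_eq_coeff_mul _ _ (by omega) ha_zero,
    mul_comm, PowerSeries.mul_inv_cancel _ (by rw [hE]; exact one_ne_zero), coeff_one,
    if_neg (by omega), zero_smul]

/-- Let `Λ` be a `K`-algebra, `U` a `Λ`-module, `y ∈ U` and `γ, α ∈ Λ`.  If
`γ^{μ+1}·y = 0`, `α·γ^μ·y ≠ 0` and `α·γ^i·y = k_i·α·γ^μ·y` for scalars `k_i`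
(`0 ≤ i ≤ μ−1`), then there are scalars `c_1, …, c_μ` such that
`x = y + Σ_{j=1}^{μ} c_j·γ^j·y` satisfies `α·γ^i·x = 0` for all `0 ≤ i ≤ μ−1`. -/
theorem top_element_change (K Λ U : Type) [Field K] [Ring Λ] [Algebra K Λ]
    [AddCommGroup U] [Module Λ U] [Module K U] [IsScalarTower K Λ U]
    (y : U) (γ α : Λ) (μ : ℕ) (hμ : 1 ≤ μ)
    (hnil : (γ ^ (μ + 1)) • y = 0)
    (hne : (α * γ ^ μ) • y ≠ 0)
    (k : ℕ → K)
    (hk : ∀ i : ℕ, i ≤ μ - 1 → (α * γ ^ i) • y = k i • ((α * γ ^ μ) • y)) :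
    ∃ c : ℕ → K, ∀ i : ℕ, i ≤ μ - 1 →
      (α * γ ^ i) • (y + ∑ j ∈ Finset.Icc 1 μ, c j • ((γ ^ j) • y)) = 0 :=
  top_element_change_general K Λ U y γ α μ hμ hnil k hk
end

section
/- Let Γ be a quiver and p a path starting at a vertex e. Let w be a path of positive length from e to e. Suppose u and r are initial subpaths of p, and α, β are arrows such that: α·u and β·r are NOT initial subpaths of p, but both α·u·w and β·r·w ARE initial subpaths of p. Then u = r and α = β. -/
/-!
Initial subpaths of a fixed path `p` are totally ordered by length, and one of them is determined
by its length. If `u` were shorter than `r`, then `α·u·w` would be an initial subpath of `r·w`;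
cancelling `w` makes `α·u` an initial subpath of `r`, hence of `p`, which is excluded. By symmetry
`u` and `r` have the same length, so `u = r`, and then `α·u·w` and `β·u·w` are initial subpaths of
`p` of the same length, so `α = β`.
-/

namespace Quiver.Path

variable {V : Type*} [Quiver V] {a b c c' d d' : V}

/-- The paper's "`u` is an initial subpath of `p`" (`Path.comp` composes left to right). -/
def IsPrefix (u : Path a c) (p : Path a b) : Prop :=
  ∃ s : Path c b, p = u.comp s

theorem IsPrefix.trans {u : Path a c} {v : Path a c'} {p : Path a b}
    (huv : u.IsPrefix v) (hvp : v.IsPrefix p) : u.IsPrefix p := by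
  obtain ⟨s, rfl⟩ := huv
  obtain ⟨t, rfl⟩ := hvp
  exact ⟨s.comp t, comp_assoc u s t⟩

theorem IsPrefix.of_cons {q : Path a c} {α : c ⟶ d} {p : Path a b}
    (h : (q.cons α).IsPrefix p) : q.IsPrefix p := by
  obtain ⟨s, rfl⟩ := h
  exact ⟨α.toPath.comp s, by rw [← comp_assoc, comp_toPath_eq_cons]⟩

theorem IsPrefix.of_comp_left {w : Path a b} {u : Path b c} {v : Path b c'}
    (h : (w.comp u).IsPrefix (w.comp v)) : u.IsPrefix v := by
  obtain ⟨s, hs⟩ := h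
  exact ⟨s, comp_injective_right w (hs.trans (comp_assoc w u s))⟩

theorem IsPrefix.isPrefix_of_length_le {u : Path a c} {v : Path a c'} {p : Path a b}
    (hu : u.IsPrefix p) (hv : v.IsPrefix p) (hle : u.length ≤ v.length) : u.IsPrefix v := by
  obtain ⟨u', hu'⟩ := hu
  obtain ⟨v', rfl⟩ := hv
  induction v' with
  | nil => exact ⟨u', hu'⟩
  | cons v'' γ ih =>
    cases u' with
    | nil =>
      have hlen := congrArg length hu'
      simp only [comp_cons, comp_nil, length_cons, length_comp] at hlen
      omega
    | cons u'' δ =>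
      simp only [comp_cons, cons.injEq] at hu'
      obtain ⟨rfl, hcomp, -⟩ := hu'
      exact ih u'' (eq_of_heq hcomp)

theorem IsPrefix.eq_of_length_eq {u : Path a c} {v : Path a c'} {p : Path a b}
    (hu : u.IsPrefix p) (hv : v.IsPrefix p) (hlen : u.length = v.length) :
    c = c' ∧ HEq u v := by
  obtain ⟨s, rfl⟩ := hu.isPrefix_of_length_le hv hlen.le
  cases s with
  | nil => exact ⟨rfl, HEq.rfl⟩
  | cons s γ =>
    simp only [comp_cons, length_cons, length_comp] at hlen
    omega

theorem IsPrefix.hom_heq_of_cons {q : Path a c} {α : c ⟶ d} {β : c ⟶ d'} {p : Path a b}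
    (hα : (q.cons α).IsPrefix p) (hβ : (q.cons β).IsPrefix p) : d = d' ∧ HEq α β := by
  obtain ⟨rfl, h⟩ := hα.eq_of_length_eq hβ rfl
  exact ⟨rfl, hom_heq_of_cons_eq_cons (eq_of_heq h)⟩

theorem length_le_of_halyard {e : V} {p : Path e b} {w : Path e e}
    {u : Path e c} {α : c ⟶ d} {r : Path e c'} {β : c' ⟶ d'}
    (hαu : ¬ (u.cons α).IsPrefix p) (hαuw : ((w.comp u).cons α).IsPrefix p)
    (hr : r.IsPrefix p) (hβrw : ((w.comp r).cons β).IsPrefix p) :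
    r.length ≤ u.length := by
  by_contra! hlt
  have hwuα : (w.comp (u.cons α)).IsPrefix (w.comp r) :=
    hαuw.isPrefix_of_length_le hβrw.of_cons (by simp only [length_cons, length_comp]; omega)
  exact hαu (hwuα.of_comp_left.trans hr)

end Quiver.Path

open Quiver.Path in
theorem halyard_injective_general (V : Type) [Quiver V] (e b : V) (p : Quiver.Path e b)
    (w : Quiver.Path e e)
    (cu du : V) (u : Quiver.Path e cu) (α : cu ⟶ du)
    (cr dr : V) (r : Quiver.Path e cr) (β : cr ⟶ dr)
    (hu : ∃ u' : Quiver.Path cu b, p = u.comp u')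
    (hr : ∃ r' : Quiver.Path cr b, p = r.comp r')
    (hαu : ¬ ∃ ρ : Quiver.Path du b, p = (u.cons α).comp ρ)
    (hβr : ¬ ∃ ρ : Quiver.Path dr b, p = (r.cons β).comp ρ)
    (hαuw : ∃ ρ : Quiver.Path du b, p = ((w.comp u).cons α).comp ρ)
    (hβrw : ∃ ρ : Quiver.Path dr b, p = ((w.comp r).cons β).comp ρ) :
    cu = cr ∧ du = dr ∧ HEq u r ∧ HEq α β := by
  have hlen : u.length = r.length :=
    le_antisymm (length_le_of_halyard hβr hβrw hu hαuw) (length_le_of_halyard hαu hαuw hr hβrw)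
  obtain ⟨rfl, hur⟩ := IsPrefix.eq_of_length_eq hu hr hlen
  obtain rfl := eq_of_heq hur
  obtain ⟨rfl, hαβ⟩ := IsPrefix.hom_heq_of_cons hαuw hβrw
  exact ⟨rfl, rfl, HEq.rfl, hαβ⟩

/-- Injectivity of the slack-halyard assignment: let `p` be a path starting at `e` and
`w` a path of positive length from `e` to `e`.  If `u, r` are initial subpaths of `p`
and `α, β` arrows such that `α·u` and `β·r` are not initial subpaths of `p` while
`α·u·w` and `β·r·w` are, then `u = r` and `α = β`. -/
theorem halyard_injective (V : Type) [Quiver V] (e b : V) (p : Quiver.Path e b)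
    (w : Quiver.Path e e) (hw : 0 < w.length)
    (cu du : V) (u : Quiver.Path e cu) (α : cu ⟶ du)
    (cr dr : V) (r : Quiver.Path e cr) (β : cr ⟶ dr)
    (hu : ∃ u' : Quiver.Path cu b, p = u.comp u')
    (hr : ∃ r' : Quiver.Path cr b, p = r.comp r')
    (hαu : ¬ ∃ ρ : Quiver.Path du b, p = (u.cons α).comp ρ)
    (hβr : ¬ ∃ ρ : Quiver.Path dr b, p = (r.cons β).comp ρ)
    (hαuw : ∃ ρ : Quiver.Path du b, p = ((w.comp u).cons α).comp ρ)
    (hβrw : ∃ ρ : Quiver.Path dr b, p = ((w.comp r).cons β).comp ρ) :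
    cu = cr ∧ du = dr ∧ HEq u r ∧ HEq α β :=
  halyard_injective_general V e b p w cu du u α cr dr r β hu hr hαu hβr hαuw hβrw
end
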